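/- Let A ⊆ S be nonempty and let I be the monomial ideal of R_S generated by {x^s : s ∈ A}. If h ∈ R_S is integral over I, then supp(h) ⊆ Γ₊(I). -/

import Mathlib

open scoped BigOperators

noncomputable section

namespace ToricNewton

/-- The submonoid `S ⊆ ℤⁿ` generated by `b₁, …, b_r`. -/
def Sgroup {n r : ℕ} (b : Fin r → Fin n → ℤ) : AddSubmonoid (Fin n → ℤ) :=
  AddSubmonoid.closure (Set.range b)

/-- View an exponent `d ∈ ℕⁿ` as a point of `ℤⁿ`. -/
def expToZ {n : ℕ} (d : Fin n →₀ ℕ) : Fin n → ℤ := fun i => (d i : ℤ)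

lemma expToZ_zero {n : ℕ} : expToZ (0 : Fin n →₀ ℕ) = 0 := by
  funext i; simp [expToZ]

lemma expToZ_add {n : ℕ} (d e : Fin n →₀ ℕ) : expToZ (d + e) = expToZ d + expToZ e := by
  funext i; simp [expToZ]

/-- `R_S`: the subalgebra of `ℂ[[x₁,…,xₙ]]` of series with support in `S`;
this is the algebraic model of the local ring `𝒪_{X(S)}` at the origin. -/
def RS {n r : ℕ} (b : Fin r → Fin n → ℤ) : Subalgebra ℂ (MvPowerSeries (Fin n) ℂ) where
  carrier := { f | ∀ d : Fin n →₀ ℕ, MvPowerSeries.coeff (R := ℂ) d f ≠ 0 → expToZ d ∈ Sgroup b }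
  add_mem' := by
    intro f g hf hg d hd
    rw [Set.mem_setOf_eq] at hf hg
    rw [map_add] at hd
    by_cases h1 : MvPowerSeries.coeff (R := ℂ) d f ≠ 0
    · exact hf d h1
    · push_neg at h1
      exact hg d (by simpa [h1] using hd)
  zero_mem' := by intro d hd; simp at hd
  one_mem' := by
    intro d hd
    rw [MvPowerSeries.coeff_one] at hd
    split_ifs at hd with h
    · subst h; simpa [expToZ_zero] using (Sgroup b).zero_mem
    · exact absurd rfl hd
  mul_mem' := by
    intro f g hf hg d hd
    rw [Set.mem_setOf_eq] at hf hg
    rw [MvPowerSeries.coeff_mul] at hd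
    obtain ⟨p, hp, hne⟩ := Finset.exists_ne_zero_of_sum_ne_zero hd
    rw [Finset.HasAntidiagonal.mem_antidiagonal] at hp
    have h1 : MvPowerSeries.coeff (R := ℂ) p.1 f ≠ 0 := left_ne_zero_of_mul hne
    have h2 : MvPowerSeries.coeff (R := ℂ) p.2 g ≠ 0 := right_ne_zero_of_mul hne
    have := (Sgroup b).add_mem (hf _ h1) (hg _ h2)
    rwa [← expToZ_add, hp] at this
  algebraMap_mem' := by
    intro c d hd
    rw [MvPowerSeries.algebraMap_apply, MvPowerSeries.coeff_C] at hd
    split_ifs at hd with h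
    · subst h; simpa [expToZ_zero] using (Sgroup b).zero_mem
    · exact absurd rfl hd

/-- The exponent in `ℕⁿ` associated to `s ∈ ℤⁿ` (with nonnegative entries). -/
def natExp {n : ℕ} (s : Fin n → ℤ) : Fin n →₀ ℕ :=
  Finsupp.equivFunOnFinite.symm fun i => (s i).toNat

/-- The monomial power series `x^s` with coefficient `1`. -/
def monomialZ {n : ℕ} (s : Fin n → ℤ) : MvPowerSeries (Fin n) ℂ :=
  MvPowerSeries.monomial (R := ℂ) (natExp s) 1

/-- View a lattice point as a point of `ℝⁿ`. -/
def toReal {n : ℕ} (k : Fin n → ℤ) : Fin n → ℝ := fun i => (k i : ℝ)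

/-- The standard pairing on `ℝⁿ`. -/
def dotR {n : ℕ} (x v : Fin n → ℝ) : ℝ := ∑ i, x i * v i

/-- The cone of `S`, i.e. nonnegative real combinations of `b₁, …, b_r`. -/
def coneS {n r : ℕ} (b : Fin r → Fin n → ℤ) : Set (Fin n → ℝ) :=
  { x | ∃ lam : Fin r → ℝ, (∀ i, 0 ≤ lam i) ∧ x = ∑ i, lam i • toReal (b i) }

/-- The dual cone of `cone(S)`. -/
def dualConeS {n r : ℕ} (b : Fin r → Fin n → ℤ) : Set (Fin n → ℝ) :=
  { u | ∀ v ∈ coneS b, 0 ≤ dotR u v }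

/-- The Newton polyhedron `Γ₊(A)` of `A ⊆ S`: the convex hull of
`{k + v : k ∈ A, v ∈ cone(S)}`. -/
def NewtonPoly {n r : ℕ} (b : Fin r → Fin n → ℤ) (A : Set (Fin n → ℤ)) :
    Set (Fin n → ℝ) :=
  convexHull ℝ { x | ∃ k ∈ A, ∃ v ∈ coneS b, x = toReal k + v }

/-- `ℓ(v, P) = inf {⟨k, v⟩ : k ∈ P}`. -/
def ellP {n : ℕ} (P : Set (Fin n → ℝ)) (v : Fin n → ℝ) : ℝ :=
  sInf ((fun k => dotR k v) '' P)

/-- `Δ(v, P) = {k ∈ P : ⟨k, v⟩ = ℓ(v, P)}`. -/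
def faceP {n : ℕ} (P : Set (Fin n → ℝ)) (v : Fin n → ℝ) : Set (Fin n → ℝ) :=
  { k ∈ P | dotR k v = ellP P v }

/-- The support of a power series, as a subset of `ℤⁿ`. -/
def suppZ {n : ℕ} (g : MvPowerSeries (Fin n) ℂ) : Set (Fin n → ℤ) :=
  { s | ∃ d : Fin n →₀ ℕ, MvPowerSeries.coeff (R := ℂ) d g ≠ 0 ∧ s = expToZ d }

/-- The Newton polyhedron `Γ₊(I)` of an ideal `I ⊆ R_S`. -/
def NewtonIdeal {n r : ℕ} (b : Fin r → Fin n → ℤ) (I : Ideal ↥(RS b)) :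
    Set (Fin n → ℝ) :=
  NewtonPoly b (⋃ g ∈ (I : Set ↥(RS b)), suppZ (g : MvPowerSeries (Fin n) ℂ))

/-- `h` is integral over the ideal `I`:
`h^m + a₁ h^(m-1) + ⋯ + a_m = 0` with `aᵢ ∈ Iⁱ`. -/
def IsIntegralOverIdeal {R : Type*} [CommRing R] (I : Ideal R) (h : R) : Prop :=
  ∃ m : ℕ, 0 < m ∧ ∃ a : Fin m → R, (∀ i : Fin m, a i ∈ I ^ ((i : ℕ) + 1)) ∧
    h ^ m + ∑ i : Fin m, a i * h ^ (m - 1 - (i : ℕ)) = 0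

/-- `I°`: the ideal generated by the monomials `x^k` with `k ∈ S ∩ Γ₊(I)`. -/
def Icirc {n r : ℕ} (b : Fin r → Fin n → ℤ) (I : Ideal ↥(RS b)) : Ideal ↥(RS b) :=
  Ideal.span { m : ↥(RS b) | ∃ s : Fin n → ℤ, s ∈ Sgroup b ∧
    toReal s ∈ NewtonIdeal b I ∧ (m : MvPowerSeries (Fin n) ℂ) = monomialZ s }

/-- `C(Ī)`: the convex hull of the exponents of the monomials in the integral closure. -/
def CIbar {n r : ℕ} (b : Fin r → Fin n → ℤ) (I : Ideal ↥(RS b)) : Set (Fin n → ℝ) :=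
  convexHull ℝ (toReal '' { s : Fin n → ℤ | s ∈ Sgroup b ∧
    ∃ m : ↥(RS b), (m : MvPowerSeries (Fin n) ℂ) = monomialZ s ∧ IsIntegralOverIdeal I m })

/-- The coefficient of `g` at a lattice exponent `v`. -/
def coeffZ {n : ℕ} (g : MvPowerSeries (Fin n) ℂ) (v : Fin n → ℤ) : ℂ :=
  MvPowerSeries.coeff (R := ℂ) (natExp v) g

/-- `L(g_Δ)` evaluated at `z`: the polynomial `∑_{v ∈ supp(g) ∩ Δ} a_v z^v`. -/
def Lface {n : ℕ} (g : MvPowerSeries (Fin n) ℂ) (Δ : Set (Fin n → ℝ))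
    (z : Fin n → ℂ) : ℂ :=
  ∑ᶠ v ∈ { v : Fin n → ℤ | v ∈ suppZ g ∧ toReal v ∈ Δ },
    coeffZ g v * ∏ i, z i ^ (v i)

/-- `Δ` is a (nonempty) compact face of the polyhedron `P`. -/
def IsCompactFace {n r : ℕ} (b : Fin r → Fin n → ℤ) (P Δ : Set (Fin n → ℝ)) : Prop :=
  (∃ v ∈ dualConeS b, Δ = faceP P v) ∧ Δ.Nonempty ∧ IsCompact Δ

/-- A finite generating family of `I` is non-degenerate if on every compact face `Δ`
of `Γ₊(I)` the polynomials `L((gⱼ)_Δ)` have no common zero in the torus `(ℂ*)ⁿ`. -/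
def NondegenFamily {n r : ℕ} (b : Fin r → Fin n → ℤ) {l : ℕ}
    (g : Fin l → ↥(RS b)) (I : Ideal ↥(RS b)) : Prop :=
  ∀ Δ : Set (Fin n → ℝ), IsCompactFace b (NewtonIdeal b I) Δ →
    ¬ ∃ z : Fin n → ℂ, (∀ i, z i ≠ 0) ∧
      ∀ j, Lface (g j : MvPowerSeries (Fin n) ℂ) Δ z = 0

/-- An ideal is non-degenerate if it admits a non-degenerate finite generating family. -/
def Nondegenerate {n r : ℕ} (b : Fin r → Fin n → ℤ) (I : Ideal ↥(RS b)) : Prop :=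
  ∃ l : ℕ, ∃ g : Fin l → ↥(RS b), Ideal.span (Set.range g) = I ∧ NondegenFamily b g I

/-- The toric ideal `I_S ⊆ ℂ[x₁,…,x_r]`, generated by the binomials
`x^{α₊} - x^{α₋}` over the relations `α` of `b₁, …, b_r`. -/
def toricIdeal {n r : ℕ} (b : Fin r → Fin n → ℤ) : Ideal (MvPolynomial (Fin r) ℂ) :=
  Ideal.span { p | ∃ α : Fin r → ℤ, (∑ i, α i • b i) = 0 ∧
    p = (∏ i, MvPolynomial.X i ^ (α i).toNat) - ∏ i, MvPolynomial.X i ^ (-(α i)).toNat }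

/-- The affine toric variety `X(S) = V(I_S) ⊆ ℂ^r`. -/
def XS {n r : ℕ} (b : Fin r → Fin n → ℤ) : Set (Fin r → ℂ) :=
  { x | ∀ p ∈ toricIdeal b, MvPolynomial.eval x p = 0 }

end ToricNewton

/-!
Suppose `s ∈ supp h` lies outside `Γ₊(I)`. The integral equation involves only finitely many
generators `x^t`, `t ∈ E`, and `Γ₊(E) = conv E + cone(S)` is closed, so a linear functional `f`,
nonnegative on `cone(S)`, satisfies `f(s) < u < f(t)` for all `t ∈ E`. Adding a small multiple of
the degree turns `f` into an additive weight `W` on exponents, nonnegative on `S`, with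
`W(s) < u ≤ W(t)` and finite sublevel sets on `S`. Hence the `i`-th power of the ideal generated by
these monomials lives in weights `≥ i u`, and the least weight `μ` on `supp h` exists and satisfies
`μ < u`. Since `ℂ[[x]]` is a domain, the initial form of `h^m` is the nonzero `m`-th power of that
of `h`, so `h^m` has a nonzero coefficient of weight `m μ`, whereas every other term `a_i h^(m-i)`
of the equation has weights `≥ i u + (m - i) μ > m μ`: a contradiction.
-/

namespace MvPowerSeries

variable {σ R : Type*} [CommRing R] (W : (σ →₀ ℕ) →+ ℝ)

def HasWeightGE (c : ℝ) (g : MvPowerSeries σ R) : Prop :=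
  ∀ d, coeff d g ≠ 0 → c ≤ W d

def IsWeightHomogeneous (c : ℝ) (g : MvPowerSeries σ R) : Prop :=
  ∀ d, coeff d g ≠ 0 → W d = c

def weightInitial (c : ℝ) (g : MvPowerSeries σ R) : MvPowerSeries σ R :=
  fun d => if W d = c then coeff d g else 0

variable {W}

lemma coeff_weightInitial (c : ℝ) (g : MvPowerSeries σ R) (d : σ →₀ ℕ) :
    coeff d (weightInitial W c g) = if W d = c then coeff d g else 0 :=
  coeff_apply _ _

lemma weightInitial_isWeightHomogeneous (c : ℝ) (g : MvPowerSeries σ R) :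
    IsWeightHomogeneous W c (weightInitial W c g) := by
  intro d hd
  rw [coeff_weightInitial] at hd
  by_contra h
  exact hd (if_neg h)

lemma exists_coeff_ne_zero_of_coeff_mul_ne_zero {f g : MvPowerSeries σ R} {d : σ →₀ ℕ}
    (hd : coeff d (f * g) ≠ 0) :
    ∃ d₁ d₂, d₁ + d₂ = d ∧ coeff d₁ f ≠ 0 ∧ coeff d₂ g ≠ 0 := by
  classical
  rw [coeff_mul] at hd
  obtain ⟨p, hp, hne⟩ := Finset.exists_ne_zero_of_sum_ne_zero hd
  exact ⟨p.1, p.2, Finset.HasAntidiagonal.mem_antidiagonal.mp hp, left_ne_zero_of_mul hne,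
    right_ne_zero_of_mul hne⟩

lemma eq_zero_of_coeff_one_ne_zero {d : σ →₀ ℕ} (hd : coeff d (1 : MvPowerSeries σ R) ≠ 0) :
    d = 0 := by
  classical
  rw [coeff_one] at hd
  by_contra h
  exact hd (if_neg h)

namespace HasWeightGE

lemma mono {c c' : ℝ} {g : MvPowerSeries σ R} (hg : HasWeightGE W c g) (hc : c' ≤ c) :
    HasWeightGE W c' g :=
  fun d hd => hc.trans (hg d hd)

lemma add {c : ℝ} {f g : MvPowerSeries σ R} (hf : HasWeightGE W c f) (hg : HasWeightGE W c g) :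
    HasWeightGE W c (f + g) := by
  intro d hd
  rw [map_add] at hd
  by_cases hfd : coeff d f = 0
  · exact hg d (by simpa [hfd] using hd)
  · exact hf d hfd

lemma mul {c c' : ℝ} {f g : MvPowerSeries σ R} (hf : HasWeightGE W c f)
    (hg : HasWeightGE W c' g) : HasWeightGE W (c + c') (f * g) := by
  intro d hd
  obtain ⟨d₁, d₂, rfl, h₁, h₂⟩ := exists_coeff_ne_zero_of_coeff_mul_ne_zero hd
  rw [map_add]
  exact add_le_add (hf d₁ h₁) (hg d₂ h₂)

lemma pow {c : ℝ} {g : MvPowerSeries σ R} (hg : HasWeightGE W c g) (k : ℕ) :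
    HasWeightGE W (k * c) (g ^ k) := by
  induction k with
  | zero =>
    intro d hd
    simp [eq_zero_of_coeff_one_ne_zero hd]
  | succ k ih =>
    rw [pow_succ, Nat.cast_succ, add_one_mul]
    exact ih.mul hg

end HasWeightGE

namespace IsWeightHomogeneous

lemma mul {c c' : ℝ} {f g : MvPowerSeries σ R} (hf : IsWeightHomogeneous W c f)
    (hg : IsWeightHomogeneous W c' g) : IsWeightHomogeneous W (c + c') (f * g) := by
  intro d hd
  obtain ⟨d₁, d₂, rfl, h₁, h₂⟩ := exists_coeff_ne_zero_of_coeff_mul_ne_zero hd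
  rw [map_add, hf d₁ h₁, hg d₂ h₂]

lemma pow {c : ℝ} {g : MvPowerSeries σ R} (hg : IsWeightHomogeneous W c g) (k : ℕ) :
    IsWeightHomogeneous W (k * c) (g ^ k) := by
  induction k with
  | zero =>
    intro d hd
    simp [eq_zero_of_coeff_one_ne_zero hd]
  | succ k ih =>
    rw [pow_succ, Nat.cast_succ, add_one_mul]
    exact ih.mul hg

end IsWeightHomogeneous

lemma coeff_pow_eq_coeff_weightInitial_pow {μ : ℝ} {g : MvPowerSeries σ R}
    (hg : HasWeightGE W μ g) (k : ℕ) {d : σ →₀ ℕ} (hd : W d ≤ k * μ) :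
    coeff d (g ^ k) = coeff d (weightInitial W μ g ^ k) := by
  classical
  induction k generalizing d with
  | zero => rfl
  | succ k ih =>
    rw [pow_succ, pow_succ, coeff_mul, coeff_mul]
    refine Finset.sum_congr rfl fun p hp => ?_
    have hsum : W p.1 + W p.2 = W d := by
      rw [← map_add, Finset.HasAntidiagonal.mem_antidiagonal.mp hp]
    by_cases h₂ : coeff p.2 g = 0
    · rw [h₂, coeff_weightInitial, h₂, ite_self, mul_zero, mul_zero]
    by_cases h₁ : coeff p.1 (g ^ k) = 0
    · have hp₁ : W p.1 ≤ k * μ := by push_cast at hd; linarith [hg p.2 h₂]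
      rw [h₁, ← ih hp₁, h₁, zero_mul, zero_mul]
    have hk := hg.pow k p.1 h₁
    have hμ := hg p.2 h₂
    push_cast at hd
    rw [ih (by linarith), coeff_weightInitial, if_pos (by linarith)]

lemma exists_coeff_pow_ne_zero_of_weight_eq [NoZeroDivisors R] {μ : ℝ}
    {g : MvPowerSeries σ R} (hg : HasWeightGE W μ g) {d₀ : σ →₀ ℕ} (hd₀ : coeff d₀ g ≠ 0)
    (hW : W d₀ = μ) (k : ℕ) : ∃ d, W d = k * μ ∧ coeff d (g ^ k) ≠ 0 := by
  have hinit : weightInitial W μ g ≠ 0 := by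
    intro h0
    have := coeff_weightInitial (W := W) μ g d₀
    rw [h0, map_zero, if_pos hW] at this
    exact hd₀ this.symm
  obtain ⟨d, hd⟩ := (ne_zero_iff_exists_coeff_ne_zero _).mp (pow_ne_zero k hinit)
  refine ⟨d, (weightInitial_isWeightHomogeneous μ g).pow k d hd, ?_⟩
  rwa [coeff_pow_eq_coeff_weightInitial_pow hg k
    ((weightInitial_isWeightHomogeneous μ g).pow k d hd).le]

lemma le_of_integral_equation [NoZeroDivisors R] {μ c : ℝ} {h : MvPowerSeries σ R}
    (hh : HasWeightGE W μ h) {d₀ : σ →₀ ℕ} (hd₀ : coeff d₀ h ≠ 0) (hW : W d₀ = μ) {m : ℕ}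
    (a : Fin m → MvPowerSeries σ R)
    (ha : ∀ i : Fin m, HasWeightGE W (((i : ℕ) + 1 : ℕ) * c) (a i))
    (heq : h ^ m + ∑ i : Fin m, a i * h ^ (m - 1 - (i : ℕ)) = 0) : c ≤ μ := by
  by_contra! hlt
  obtain ⟨d, hWd, hd⟩ := exists_coeff_pow_ne_zero_of_weight_eq hh hd₀ hW m
  have hterm : ∀ i : Fin m, coeff d (a i * h ^ (m - 1 - (i : ℕ))) = 0 := by
    intro i
    by_contra hne
    have hle := ((ha i).mul (hh.pow _)) d hne
    have hcast : ((m - 1 - (i : ℕ) : ℕ) : ℝ) = m - ((i : ℕ) + 1) := by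
      rw [Nat.sub_sub, Nat.cast_sub (by omega)]
      push_cast
      ring
    rw [hcast, hWd] at hle
    push_cast at hle
    nlinarith
  apply hd
  simpa [map_sum, hterm] using congrArg (coeff d) heq

lemma exists_min_weight {g : MvPowerSeries σ R} (hg : g ≠ 0)
    (hfin : ∀ c, {d | coeff d g ≠ 0 ∧ W d ≤ c}.Finite) :
    ∃ d₀, coeff d₀ g ≠ 0 ∧ HasWeightGE W (W d₀) g := by
  obtain ⟨d₁, hd₁⟩ := (ne_zero_iff_exists_coeff_ne_zero g).mp hg
  obtain ⟨d₀, ⟨hd₀, hd₀₁⟩, hmin⟩ :=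
    Set.exists_min_image _ W (hfin (W d₁)) ⟨d₁, hd₁, le_rfl⟩
  refine ⟨d₀, hd₀, fun d hd => ?_⟩
  by_cases hdd₁ : W d ≤ W d₁
  · exact hmin d ⟨hd, hdd₁⟩
  · linarith

lemma finite_setOf_coeff_ne_zero_weight_le [Finite σ] {ε : ℝ} (hε : 0 < ε)
    {g : MvPowerSeries σ R} (hg : ∀ d, coeff d g ≠ 0 → ε * d.degree ≤ W d) (c : ℝ) :
    {d | coeff d g ≠ 0 ∧ W d ≤ c}.Finite :=
  (Finsupp.finite_of_degree_le ⌊c / ε⌋₊).subset fun d ⟨hd, hc⟩ =>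
    Nat.le_floor ((le_div_iff₀' hε).2 ((hg d hd).trans hc))

section Subalgebra

variable {B : Subalgebra R (MvPowerSeries σ R)} {G : Set B} {c : ℝ}

lemma HasWeightGE.of_mem_span (hB : ∀ x : B, HasWeightGE W 0 (x : MvPowerSeries σ R))
    (hG : ∀ g ∈ G, HasWeightGE W c (g : MvPowerSeries σ R)) {x : B} (hx : x ∈ Ideal.span G) :
    HasWeightGE W c (x : MvPowerSeries σ R) := by
  induction hx using Submodule.span_induction with
  | mem g hg => exact hG g hg
  | zero => intro d hd; simp at hd
  | add u v _ _ hu hv => exact hu.add hv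
  | smul a u _ hu => simpa using (hB a).mul hu

lemma HasWeightGE.of_mem_span_pow (hB : ∀ x : B, HasWeightGE W 0 (x : MvPowerSeries σ R))
    (hG : ∀ g ∈ G, HasWeightGE W c (g : MvPowerSeries σ R)) (k : ℕ) {x : B}
    (hx : x ∈ Ideal.span G ^ k) :
    HasWeightGE W (k * c) (x : MvPowerSeries σ R) := by
  induction k generalizing x with
  | zero => simpa using hB x
  | succ k ih =>
    rw [pow_succ] at hx
    refine Submodule.mul_induction_on hx (fun y hy z hz => ?_) fun y z hy hz => hy.add hz
    rw [Nat.cast_succ, add_one_mul]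
    exact (ih hy).mul (HasWeightGE.of_mem_span hB hG hz)

end Subalgebra

end MvPowerSeries

theorem Ideal.exists_finset_subset_mem_span_pow {R : Type*} [CommSemiring R] {G : Set R}
    {k : ℕ} {x : R} (hx : x ∈ Ideal.span G ^ k) :
    ∃ T : Finset R, ↑T ⊆ G ∧ x ∈ Ideal.span ↑T ^ k := by
  classical
  induction k generalizing x with
  | zero => exact ⟨∅, by simp, by simp [Ideal.one_eq_top]⟩
  | succ k ih =>
    have enlarge {T T' : Finset R} (hTT' : T ⊆ T') : Ideal.span (T : Set R) ≤ Ideal.span ↑T' :=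
      Ideal.span_mono (Finset.coe_subset.mpr hTT')
    rw [pow_succ] at hx
    refine Submodule.mul_induction_on hx (fun y hy z hz => ?_) fun y z hy hz => ?_
    · obtain ⟨T₁, hT₁G, hyT₁⟩ := ih hy
      obtain ⟨T₂, hT₂G, hzT₂⟩ := Submodule.mem_span_finite_of_mem_span hz
      refine ⟨T₁ ∪ T₂, by simp [hT₁G, hT₂G], ?_⟩
      rw [pow_succ]
      exact Ideal.mul_mem_mul (Ideal.pow_right_mono (enlarge Finset.subset_union_left) k hyT₁)
        (enlarge Finset.subset_union_right hzT₂)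
    · obtain ⟨T₁, hT₁G, hyT₁⟩ := hy
      obtain ⟨T₂, hT₂G, hzT₂⟩ := hz
      exact ⟨T₁ ∪ T₂, by simp [hT₁G, hT₂G],
        add_mem (Ideal.pow_right_mono (enlarge Finset.subset_union_left) _ hyT₁)
          (Ideal.pow_right_mono (enlarge Finset.subset_union_right) _ hzT₂)⟩

lemma nonneg_of_forall_lt_add_mul {u a c : ℝ} (h : ∀ t : ℝ, 0 ≤ t → u < a + t * c) :
    0 ≤ c := by
  by_contra! hc
  have hau : u < a := by simpa using h 0 le_rfl
  have := h ((a - u) / -c) (div_nonneg (sub_nonneg.2 hau.le) (neg_nonneg.2 hc.le))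
  rw [div_mul_eq_mul_div, mul_div_assoc, div_neg_self hc.ne, mul_neg_one] at this
  linarith

namespace ToricNewton

section Integral

variable {R : Type*} [CommRing R]

lemma IsIntegralOverIdeal.mono {I J : Ideal R} (hIJ : I ≤ J) {h : R}
    (hh : IsIntegralOverIdeal I h) : IsIntegralOverIdeal J h := by
  obtain ⟨m, hm, a, ha, heq⟩ := hh
  exact ⟨m, hm, a, fun i => Ideal.pow_right_mono hIJ _ (ha i), heq⟩

lemma IsIntegralOverIdeal.exists_finset_subset {G : Set R} {h : R}
    (hh : IsIntegralOverIdeal (Ideal.span G) h) :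
    ∃ T : Finset R, ↑T ⊆ G ∧ IsIntegralOverIdeal (Ideal.span ↑T) h := by
  classical
  obtain ⟨m, hm, a, ha, heq⟩ := hh
  choose T hTG haT using fun i => Ideal.exists_finset_subset_mem_span_pow (ha i)
  refine ⟨Finset.univ.biUnion T, by simpa using hTG, m, hm, a, fun i => ?_, heq⟩
  exact Ideal.pow_right_mono (Ideal.span_mono (Finset.coe_subset.mpr
    (Finset.subset_biUnion_of_mem T (Finset.mem_univ i)))) _ (haT i)

end Integral

theorem IsIntegralOverIdeal.hasWeightGE {σ R : Type*} [CommRing R] [NoZeroDivisors R]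
    {W : (σ →₀ ℕ) →+ ℝ} {B : Subalgebra R (MvPowerSeries σ R)}
    (hB : ∀ x : B, MvPowerSeries.HasWeightGE W 0 (x : MvPowerSeries σ R))
    {G : Set B} {c : ℝ} (hG : ∀ g ∈ G, MvPowerSeries.HasWeightGE W c (g : MvPowerSeries σ R))
    {h : B} (hint : IsIntegralOverIdeal (Ideal.span G) h)
    (hfin : ∀ c', {d | MvPowerSeries.coeff d (h : MvPowerSeries σ R) ≠ 0 ∧ W d ≤ c'}.Finite) :
    MvPowerSeries.HasWeightGE W c (h : MvPowerSeries σ R) := by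
  obtain ⟨m, -, a, ha, heq⟩ := hint
  by_cases h0 : (h : MvPowerSeries σ R) = 0
  · intro d hd
    simp [h0] at hd
  obtain ⟨d₀, hd₀, hmin⟩ := MvPowerSeries.exists_min_weight h0 hfin
  refine hmin.mono (MvPowerSeries.le_of_integral_equation hmin hd₀ rfl (fun i => a i)
    (fun i => MvPowerSeries.HasWeightGE.of_mem_span_pow hB hG _ (ha i)) ?_)
  simpa using congrArg (Subalgebra.val B) heq

open scoped Pointwise

section Toric

variable {n r : ℕ} {b : Fin r → Fin n → ℤ}

lemma nonneg_of_mem_Sgroup (hb_nonneg : ∀ i j, 0 ≤ b i j) {k : Fin n → ℤ}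
    (hk : k ∈ Sgroup b) (j : Fin n) : 0 ≤ k j := by
  induction hk using AddSubmonoid.closure_induction with
  | mem x hx => obtain ⟨i, rfl⟩ := hx; exact hb_nonneg i j
  | zero => exact le_rfl
  | add x y _ _ hx hy => exact add_nonneg hx hy

lemma toReal_add (k k' : Fin n → ℤ) : toReal (k + k') = toReal k + toReal k' := by
  funext j; simp [toReal]

lemma toReal_zero : toReal (0 : Fin n → ℤ) = 0 := by
  funext j; simp [toReal]

lemma expToZ_natExp {t : Fin n → ℤ} (ht : ∀ j, 0 ≤ t j) : expToZ (natExp t) = t := by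
  funext j; simp [expToZ, natExp, Int.toNat_of_nonneg (ht j)]

lemma coneS_add {x y : Fin n → ℝ} (hx : x ∈ coneS b) (hy : y ∈ coneS b) :
    x + y ∈ coneS b := by
  obtain ⟨l, hl, rfl⟩ := hx
  obtain ⟨l', hl', rfl⟩ := hy
  exact ⟨l + l', fun i => add_nonneg (hl i) (hl' i),
    by simp [add_smul, Finset.sum_add_distrib]⟩

lemma coneS_smul {t : ℝ} (ht : 0 ≤ t) {x : Fin n → ℝ} (hx : x ∈ coneS b) :
    t • x ∈ coneS b := by
  obtain ⟨l, hl, rfl⟩ := hx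
  exact ⟨t • l, fun i => mul_nonneg ht (hl i), by simp [Finset.smul_sum, smul_smul]⟩

lemma zero_mem_coneS : (0 : Fin n → ℝ) ∈ coneS b := ⟨0, fun _ => le_rfl, by simp⟩

lemma convex_coneS : Convex ℝ (coneS b) :=
  fun _ hx _ hy _ _ ha hc _ => coneS_add (coneS_smul ha hx) (coneS_smul hc hy)

lemma toReal_mem_coneS {k : Fin n → ℤ} (hk : k ∈ Sgroup b) : toReal k ∈ coneS b := by
  classical
  induction hk using AddSubmonoid.closure_induction with
  | mem x hx =>
    obtain ⟨i, rfl⟩ := hx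
    refine ⟨Pi.single i 1, fun j => ?_, by simp [Pi.single_apply]⟩
    by_cases hj : j = i <;> simp [hj]
  | zero => rw [toReal_zero]; exact zero_mem_coneS
  | add x y _ _ hx hy => rw [toReal_add]; exact coneS_add hx hy

/-- The coordinate sum is at least `1` on each generator, so it bounds the coefficients of a
point of the cone; a convergent sequence of cone points thus has coefficients in a compact box. -/
lemma isClosed_coneS (hb_ne : ∀ i, b i ≠ 0) (hb_nonneg : ∀ i j, 0 ≤ b i j) :
    IsClosed (coneS b) := by
  set L : (Fin r → ℝ) → (Fin n → ℝ) := fun l => ∑ i, l i • toReal (b i)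
  have hL : Continuous L := by fun_prop
  have hcoordSum : Continuous fun x : Fin n → ℝ => ∑ j, x j := by fun_prop
  have hgen : ∀ i, 1 ≤ ∑ j, toReal (b i) j := by
    intro i
    obtain ⟨j₀, hj₀⟩ := Function.ne_iff.mp (hb_ne i)
    have h₁ : (1 : ℤ) ≤ ∑ j, b i j :=
      (show 1 ≤ b i j₀ by have := hb_nonneg i j₀; simp at hj₀; omega).trans
        (Finset.single_le_sum (fun j _ => hb_nonneg i j) (Finset.mem_univ j₀))
    have h₁' : ((1 : ℤ) : ℝ) ≤ ((∑ j, b i j : ℤ) : ℝ) := Int.cast_le.mpr h₁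
    simpa [toReal] using h₁'
  have hcoef : ∀ l : Fin r → ℝ, (∀ i, 0 ≤ l i) → ∀ i, l i ≤ ∑ j, L l j := by
    intro l hl i
    have hsum : ∑ j, L l j = ∑ i', l i' * ∑ j, toReal (b i') j := by
      simp only [L, Finset.sum_apply, Pi.smul_apply, smul_eq_mul, Finset.mul_sum]
      exact Finset.sum_comm
    rw [hsum]
    calc l i ≤ l i * ∑ j, toReal (b i) j := le_mul_of_one_le_right (hl i) (hgen i)
      _ ≤ _ := Finset.single_le_sum (f := fun i' => l i' * ∑ j, toReal (b i') j)
          (fun i' _ => mul_nonneg (hl i') (zero_le_one.trans (hgen i'))) (Finset.mem_univ i)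
  refine IsSeqClosed.isClosed fun x p hx hp => ?_
  choose l hl hxl using hx
  obtain ⟨M, hM⟩ := ((hcoordSum.tendsto p).comp hp).bddAbove_range
  have hbox : ∀ k, l k ∈ Set.Icc 0 (fun _ => M) := fun k =>
    ⟨hl k, fun i => (hcoef _ (hl k) i).trans (by simpa [L, hxl k] using hM ⟨k, rfl⟩)⟩
  obtain ⟨l₀, hl₀, φ, hφ, hlim⟩ := isCompact_Icc.tendsto_subseq hbox
  refine ⟨l₀, hl₀.1, tendsto_nhds_unique (hp.comp hφ.tendsto_atTop) ?_⟩
  have := (hL.tendsto l₀).comp hlim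
  rwa [show L ∘ l ∘ φ = x ∘ φ from funext fun k => (hxl (φ k)).symm] at this

lemma newtonPoly_eq_convexHull_add (A : Set (Fin n → ℤ)) :
    NewtonPoly b A = convexHull ℝ (toReal '' A) + coneS b := by
  have hset : { x | ∃ k ∈ A, ∃ v ∈ coneS b, x = toReal k + v } = toReal '' A + coneS b := by
    ext x
    simp [Set.mem_add, eq_comm]
  rw [NewtonPoly, hset, convexHull_add, convex_coneS.convexHull_eq]

lemma newtonPoly_mono {A A' : Set (Fin n → ℤ)} (hAA' : A ⊆ A') :
    NewtonPoly b A ⊆ NewtonPoly b A' :=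
  convexHull_mono fun _ ⟨k, hk, v, hv, hx⟩ => ⟨k, hAA' hk, v, hv, hx⟩

lemma isClosed_newtonPoly (hb_ne : ∀ i, b i ≠ 0) (hb_nonneg : ∀ i j, 0 ≤ b i j)
    {E : Set (Fin n → ℤ)} (hE : E.Finite) : IsClosed (NewtonPoly b E) := by
  rw [newtonPoly_eq_convexHull_add]
  exact (isClosed_coneS hb_ne hb_nonneg).add_left_of_isCompact
    ((hE.image toReal).isCompact_convexHull ℝ)

lemma exists_separating_functional (hb_ne : ∀ i, b i ≠ 0) (hb_nonneg : ∀ i j, 0 ≤ b i j)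
    {E : Set (Fin n → ℤ)} (hE : E.Finite) (hEne : E.Nonempty) {x : Fin n → ℝ}
    (hx : x ∉ NewtonPoly b E) :
    ∃ f : (Fin n → ℝ) →L[ℝ] ℝ, ∃ u, f x < u ∧ (∀ t ∈ E, u < f (toReal t)) ∧
      ∀ v ∈ coneS b, 0 ≤ f v := by
  obtain ⟨f, u, hfx, hf⟩ :=
    geometric_hahn_banach_point_closed (convex_convexHull ℝ _)
      (isClosed_newtonPoly hb_ne hb_nonneg hE) hx
  have hmem : ∀ t ∈ E, ∀ v ∈ coneS b, toReal t + v ∈ NewtonPoly b E :=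
    fun t ht v hv => subset_convexHull ℝ _ ⟨t, ht, v, hv, rfl⟩
  obtain ⟨t₀, ht₀⟩ := hEne
  refine ⟨f, u, hfx, fun t ht => by simpa using hf _ (hmem t ht 0 zero_mem_coneS),
    fun v hv => ?_⟩
  refine nonneg_of_forall_lt_add_mul (u := u) (a := f (toReal t₀)) fun s hs => ?_
  simpa using hf _ (hmem t₀ ht₀ (s • v) (coneS_smul hs hv))

/-- Perturbing `f` by `ε > 0` times the degree makes its sublevel sets in `S` finite. -/
def toricWeight (f : (Fin n → ℝ) →L[ℝ] ℝ) (ε : ℝ) : (Fin n →₀ ℕ) →+ ℝ where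
  toFun d := f (toReal (expToZ d)) + ε * d.degree
  map_zero' := by simp [expToZ_zero, toReal_zero]
  map_add' d e := by simp only [expToZ_add, toReal_add, map_add, Nat.cast_add]; ring

lemma toricWeight_apply (f : (Fin n → ℝ) →L[ℝ] ℝ) (ε : ℝ) (d : Fin n →₀ ℕ) :
    toricWeight f ε d = f (toReal (expToZ d)) + ε * d.degree := rfl

lemma le_toricWeight {f : (Fin n → ℝ) →L[ℝ] ℝ} (hf : ∀ v ∈ coneS b, 0 ≤ f v) (ε : ℝ)
    {d : Fin n →₀ ℕ} (hd : expToZ d ∈ Sgroup b) : ε * d.degree ≤ toricWeight f ε d := by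
  rw [toricWeight_apply]
  linarith [hf _ (toReal_mem_coneS hd)]

lemma coeff_monomialZ_ne_zero {t : Fin n → ℤ} {d : Fin n →₀ ℕ}
    (hd : MvPowerSeries.coeff (R := ℂ) d (monomialZ t) ≠ 0) : d = natExp t := by
  classical
  rw [monomialZ, MvPowerSeries.coeff_monomial] at hd
  by_contra hdt
  exact hd (if_neg hdt)

lemma monomialZ_mem_RS (hb_nonneg : ∀ i j, 0 ≤ b i j) {t : Fin n → ℤ} (ht : t ∈ Sgroup b) :
    monomialZ t ∈ RS b := by
  intro d hd
  rw [coeff_monomialZ_ne_zero hd, expToZ_natExp (nonneg_of_mem_Sgroup hb_nonneg ht)]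
  exact ht

lemma mem_suppZ_monomialZ {t : Fin n → ℤ} (ht : ∀ j, 0 ≤ t j) : t ∈ suppZ (monomialZ t) :=
  ⟨natExp t, by simp [monomialZ], (expToZ_natExp ht).symm⟩

variable (b) in
def monomialIdeal (A : Set (Fin n → ℤ)) : Ideal ↥(RS b) :=
  Ideal.span { m : ↥(RS b) | ∃ s ∈ A, (m : MvPowerSeries (Fin n) ℂ) = monomialZ s }

lemma mem_monomialIdeal {A : Set (Fin n → ℤ)} {m : ↥(RS b)} {s : Fin n → ℤ} (hs : s ∈ A)
    (hm : (m : MvPowerSeries (Fin n) ℂ) = monomialZ s) : m ∈ monomialIdeal b A :=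
  Ideal.subset_span ⟨s, hs, hm⟩

lemma IsIntegralOverIdeal.exists_finite_monomialIdeal {A : Set (Fin n → ℤ)} (hA : A.Nonempty)
    {h : ↥(RS b)} (hint : IsIntegralOverIdeal (monomialIdeal b A) h) :
    ∃ E ⊆ A, E.Finite ∧ E.Nonempty ∧ IsIntegralOverIdeal (monomialIdeal b E) h := by
  obtain ⟨T, hTA, hintT⟩ := hint.exists_finset_subset
  have hTA' : ∀ m ∈ T, ∃ s ∈ A, (m : MvPowerSeries (Fin n) ℂ) = monomialZ s :=
    fun m hm => hTA hm
  choose! e heA he using hTA'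
  obtain ⟨a₀, ha₀⟩ := hA
  refine ⟨insert a₀ (e '' T), Set.insert_subset ha₀ (Set.image_subset_iff.2 heA),
    (T.finite_toSet.image e).insert a₀, Set.insert_nonempty _ _, ?_⟩
  exact hintT.mono <| Ideal.span_le.2 fun m hm =>
    mem_monomialIdeal (Set.mem_insert_of_mem _ (Set.mem_image_of_mem e hm)) (he m hm)

lemma subset_iUnion_suppZ_monomialIdeal (hb_nonneg : ∀ i j, 0 ≤ b i j) {A : Set (Fin n → ℤ)}
    (hAS : ∀ a ∈ A, a ∈ Sgroup b) :
    A ⊆ ⋃ g ∈ (monomialIdeal b A : Set ↥(RS b)), suppZ (g : MvPowerSeries (Fin n) ℂ) :=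
  fun t ht =>
  Set.mem_biUnion (x := ⟨monomialZ t, monomialZ_mem_RS hb_nonneg (hAS t ht)⟩)
    (mem_monomialIdeal ht rfl)
    (mem_suppZ_monomialZ (nonneg_of_mem_Sgroup hb_nonneg (hAS t ht)))

theorem supp_subset_newtonPoly_of_isIntegralOverIdeal (hb_ne : ∀ i, b i ≠ 0)
    (hb_nonneg : ∀ i j, 0 ≤ b i j) {E : Set (Fin n → ℤ)} (hE : E.Finite) (hEne : E.Nonempty)
    (hES : ∀ t ∈ E, t ∈ Sgroup b) {h : ↥(RS b)}
    (hint : IsIntegralOverIdeal (monomialIdeal b E) h) :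
    ∀ s ∈ suppZ (h : MvPowerSeries (Fin n) ℂ), toReal s ∈ NewtonPoly b E := by
  rintro _ ⟨dₛ, hdₛ, rfl⟩
  by_contra hs
  obtain ⟨f, u, hfs, hfE, hfcone⟩ := exists_separating_functional hb_ne hb_nonneg hE hEne hs
  set ε := (u - f (toReal (expToZ dₛ))) / (dₛ.degree + 1) with hε_def
  have hε : 0 < ε := div_pos (sub_pos.2 hfs) (by positivity)
  have hdeg (x : ↥(RS b)) (d) (hd : MvPowerSeries.coeff d (x : MvPowerSeries (Fin n) ℂ) ≠ 0) :
      ε * d.degree ≤ toricWeight f ε d :=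
    le_toricWeight hfcone ε (x.2 d hd)
  have hgen : ∀ g ∈ { m : ↥(RS b) | ∃ t ∈ E, (m : MvPowerSeries (Fin n) ℂ) = monomialZ t },
      MvPowerSeries.HasWeightGE (toricWeight f ε) u (g : MvPowerSeries (Fin n) ℂ) := by
    rintro g ⟨t, ht, hg⟩ d hd
    rw [hg] at hd
    rw [toricWeight_apply, coeff_monomialZ_ne_zero hd,
      expToZ_natExp (nonneg_of_mem_Sgroup hb_nonneg (hES t ht))]
    linarith [hfE t ht, mul_nonneg hε.le (Nat.cast_nonneg (natExp t).degree)]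
  have hW₀ : ∀ x : ↥(RS b), MvPowerSeries.HasWeightGE (toricWeight f ε) 0
      (x : MvPowerSeries (Fin n) ℂ) := fun x d hd =>
    (mul_nonneg hε.le (Nat.cast_nonneg _)).trans (hdeg x d hd)
  have hu := hint.hasWeightGE hW₀ hgen
    (MvPowerSeries.finite_setOf_coeff_ne_zero_weight_le hε (hdeg h)) dₛ hdₛ
  have hsmall : ε * dₛ.degree < u - f (toReal (expToZ dₛ)) := by
    rw [hε_def, div_mul_eq_mul_div, div_lt_iff₀ (by positivity)]
    nlinarith
  rw [toricWeight_apply] at hu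
  linarith

end Toric

theorem supp_subset_newton_of_integral_general
    (n r : ℕ) (b : Fin r → Fin n → ℤ)
    (hb_ne : ∀ i, b i ≠ 0) (hb_nonneg : ∀ i j, 0 ≤ b i j)
    (A : Set (Fin n → ℤ)) (hA : A.Nonempty) (hAS : ∀ a ∈ A, a ∈ Sgroup b)
    (I : Ideal ↥(RS b))
    (hI : I = Ideal.span { m : ↥(RS b) |
      ∃ s ∈ A, (m : MvPowerSeries (Fin n) ℂ) = monomialZ s })
    (h : ↥(RS b)) (hint : IsIntegralOverIdeal I h) :
    ∀ s ∈ suppZ (h : MvPowerSeries (Fin n) ℂ), toReal s ∈ NewtonIdeal b I := by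
  subst hI
  obtain ⟨E, hEA, hE, hEne, hintE⟩ := hint.exists_finite_monomialIdeal hA
  intro s hs
  exact newtonPoly_mono (hEA.trans (subset_iUnion_suppZ_monomialIdeal hb_nonneg hAS))
    (supp_subset_newtonPoly_of_isIntegralOverIdeal hb_ne hb_nonneg hE hEne
      (fun t ht => hAS t (hEA ht)) hintE s hs)

/-- if `h` is integral over a monomial ideal `I`, then
`supp(h) ⊆ Γ₊(I)`. -/
theorem supp_subset_newton_of_integral
    (n r : ℕ) (hn : 1 ≤ n) (hr : 1 ≤ r) (b : Fin r → Fin n → ℤ)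
    (hb_ne : ∀ i, b i ≠ 0) (hb_nonneg : ∀ i j, 0 ≤ b i j)
    (hb_gen : AddSubgroup.closure (Set.range b) = (⊤ : AddSubgroup (Fin n → ℤ)))
    (hdim : Submodule.span ℝ (coneS b) = (⊤ : Submodule ℝ (Fin n → ℝ)))
    (hstrict : ∀ x ∈ coneS b, -x ∈ coneS b → x = (0 : Fin n → ℝ))
    (A : Set (Fin n → ℤ)) (hA : A.Nonempty) (hAS : ∀ a ∈ A, a ∈ Sgroup b)
    (I : Ideal ↥(RS b))
    (hI : I = Ideal.span { m : ↥(RS b) |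
      ∃ s ∈ A, (m : MvPowerSeries (Fin n) ℂ) = monomialZ s })
    (h : ↥(RS b)) (hint : IsIntegralOverIdeal I h) :
    ∀ s ∈ suppZ (h : MvPowerSeries (Fin n) ℂ), toReal s ∈ NewtonIdeal b I :=
  supp_subset_newton_of_integral_general n r b hb_ne hb_nonneg A hA hAS I hI h hint

end ToricNewton
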